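/- arXiv:2208.09502 — 2 statements merged into one kernel-verified Lean document; each statement's English description precedes it below -/
import Mathlib

section
/- With notation as above, the total number of real lines meeting the oval of the affine curve at infinity is: 0 if b = 0; 12 for the classes Σ_{0,6} = Σ_{3,3} = Σ_{4,2}; 16 for the classes Σ_{1,5} = Σ_{2,4} = Σ_{5,1}; 8 if a + b = 4 with b > 0; and 4 if a + b = 2 with b > 0. -/
/-- The total number of real lines on the cubic surface corresponding to `μ` conjugate
pairs in the 6-tuple: `27, 15, 7, 3` for `μ = 0, 1, 2, 3`. -/
def totalRealLines (μ : ℕ) : ℕ := [27, 15, 7, 3].getD μ 0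

/-- The number of real lines meeting the oval of the affine curve at infinity for the
class `Σ_{a,b}` (with `μ = (6 - (a+b))/2` conjugate pairs): if `b` is even the proper image
of the oval is the oval and meets `2b + ab` lines; if `b` is odd the proper image is
one-sided, meets `(6 - 2μ) + ab` lines, and the oval meets the complementary real lines. -/
def ovalLineCount (a b : ℕ) : ℕ :=
  let μ := (6 - (a + b)) / 2
  if Even b then 2 * b + a * b else totalRealLines μ - ((6 - 2 * μ) + a * b)

/-- The number of real lines meeting the oval of the affine curve at infinity is: `0` if
`b = 0`; `12` for the classes `Σ_{0,6} = Σ_{3,3} = Σ_{4,2}`; `16` for the classes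
`Σ_{1,5} = Σ_{2,4} = Σ_{5,1}`; `8` if `a + b = 4` with `b > 0`; and `4` if `a + b = 2`
with `b > 0`. -/
theorem oval_line_count_cases (a b : ℕ) (h : a + b = 6 ∨ a + b = 4 ∨ a + b = 2 ∨ a + b = 0) :
    (b = 0 → ovalLineCount a b = 0) ∧
    (((a, b) = (0, 6) ∨ (a, b) = (3, 3) ∨ (a, b) = (4, 2)) → ovalLineCount a b = 12) ∧
    (((a, b) = (1, 5) ∨ (a, b) = (2, 4) ∨ (a, b) = (5, 1)) → ovalLineCount a b = 16) ∧
    (a + b = 4 → 0 < b → ovalLineCount a b = 8) ∧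
    (a + b = 2 → 0 < b → ovalLineCount a b = 4) := by
  have ha : a ≤ 6 := by omega
  have hb : b ≤ 6 := by omega
  interval_cases a <;> interval_cases b <;> simp_all [ovalLineCount, totalRealLines] <;> decide
end

section
/- Define on pairs (a,b) of nonnegative integers with a+b = 6-2μ the moves: (a,b) → (b-3, a+3) when b ≥ 3; (a,b) → (b+1, a-1) when a ≥ 2 and b ≥ 1; and (a,b) → (b-1, a+1) when b ≥ 1 and μ ≥ 1. Then the equivalence classes generated by these moves are exactly: for μ=0: {(6,0)}, {(0,6),(3,3),(4,2)}, {(1,5),(2,4),(5,1)}; for μ=1: {(4,0)}, {(0,4),(1,3),(2,2),(3,1)}; for μ=2: {(2,0)}, {(0,2),(1,1)}; for μ=3: {(0,0)}. -/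
/-- The moves on pairs `(a,b)` with `a + b = 6 - 2μ`, encoding the standard quadratic
Cremona transformations exchanging the oval and the one-sided component:
`(a,b) → (b-3, a+3)` when `b ≥ 3`; `(a,b) → (b+1, a-1)` when `a ≥ 2` and `b ≥ 1`;
`(a,b) → (b-1, a+1)` when `b ≥ 1` and `μ ≥ 1`. -/
inductive CremonaMove (μ : ℕ) : ℕ × ℕ → ℕ × ℕ → Prop
  | move1 (a b : ℕ) (h : 3 ≤ b) : CremonaMove μ (a, b) (b - 3, a + 3)
  | move2 (a b : ℕ) (ha : 2 ≤ a) (hb : 1 ≤ b) : CremonaMove μ (a, b) (b + 1, a - 1)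
  | move3 (a b : ℕ) (hb : 1 ≤ b) (hμ : 1 ≤ μ) : CremonaMove μ (a, b) (b - 1, a + 1)

/-- The classes listed in Proposition `cubic-to-plane.equiv`. -/
def cremonaClasses (μ : ℕ) : List (List (ℕ × ℕ)) :=
  match μ with
  | 0 => [[(6, 0)], [(0, 6), (3, 3), (4, 2)], [(1, 5), (2, 4), (5, 1)]]
  | 1 => [[(4, 0)], [(0, 4), (1, 3), (2, 2), (3, 1)]]
  | 2 => [[(2, 0)], [(0, 2), (1, 1)]]
  | _ => [[(0, 0)]]

lemma cremona_move_sum {μ} {p q : ℕ × ℕ} (h : CremonaMove μ p q) : q.1 + q.2 = p.1 + p.2 := by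
  cases h <;> simp <;> omega

lemma cremona_rel_case (μ : ℕ) (hμ : μ ≤ 3) {x y : ℕ × ℕ} (hxy : CremonaMove μ x y)
    (hx : x.1 + x.2 = 6 - 2 * μ) : ∃ L ∈ cremonaClasses μ, x ∈ L ∧ y ∈ L := by
  interval_cases μ <;> cases hxy <;> simp_all [cremonaClasses, Prod.ext_iff] <;> omega

lemma cremona_refl_case (μ : ℕ) (hμ : μ ≤ 3) {x : ℕ × ℕ} (hx : x.1 + x.2 = 6 - 2 * μ) :
    ∃ L ∈ cremonaClasses μ, x ∈ L ∧ x ∈ L := by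
  interval_cases μ <;> simp_all [cremonaClasses, Prod.ext_iff] <;> omega

lemma cremona_disj (μ : ℕ) (hμ : μ ≤ 3) {L L' : List (ℕ × ℕ)} (hL : L ∈ cremonaClasses μ)
    (hL' : L' ∈ cremonaClasses μ) {x : ℕ × ℕ} (hx : x ∈ L) (hx' : x ∈ L') : L = L' := by
  interval_cases μ <;> simp_all [cremonaClasses] <;>
    rcases hL with rfl | rfl | rfl <;> rcases hL' with rfl | rfl | rfl <;> simp_all <;>
    rcases hx with rfl | rfl | rfl <;> simp_all

lemma cremona_mk_edge {μ : ℕ} {p q : ℕ × ℕ} (h : CremonaMove μ p q) :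
    Relation.EqvGen (CremonaMove μ) p q := Relation.EqvGen.rel _ _ h

lemma cremona_etrans {μ : ℕ} {a b c : ℕ × ℕ} (h1 : Relation.EqvGen (CremonaMove μ) a b)
    (h2 : Relation.EqvGen (CremonaMove μ) b c) : Relation.EqvGen (CremonaMove μ) a c :=
  Relation.EqvGen.trans _ _ _ h1 h2

lemma cremona_esymm {μ : ℕ} {a b : ℕ × ℕ} (h : Relation.EqvGen (CremonaMove μ) a b) :
    Relation.EqvGen (CremonaMove μ) b a := Relation.EqvGen.symm _ _ h

lemma cremona_key (μ : ℕ) (hμ : μ ≤ 3) {x y : ℕ × ℕ}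
    (h : Relation.EqvGen (CremonaMove μ) x y) :
    x.1 + x.2 = y.1 + y.2 ∧
      (x.1 + x.2 = 6 - 2 * μ → ∃ L ∈ cremonaClasses μ, x ∈ L ∧ y ∈ L) := by
  induction h with
  | rel a b hab =>
      exact ⟨(cremona_move_sum hab).symm, fun hx => cremona_rel_case μ hμ hab hx⟩
  | refl a => exact ⟨rfl, fun hx => cremona_refl_case μ hμ hx⟩
  | symm a b _ ih =>
      refine ⟨ih.1.symm, fun hb => ?_⟩
      obtain ⟨L, hL, ha, hb'⟩ := ih.2 (ih.1.trans hb)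
      exact ⟨L, hL, hb', ha⟩
  | trans a b c _ _ ih1 ih2 =>
      refine ⟨ih1.1.trans ih2.1, fun ha => ?_⟩
      obtain ⟨L, hL, haL, hbL⟩ := ih1.2 ha
      obtain ⟨L', hL', hbL', hcL'⟩ := ih2.2 (by rw [← ih1.1]; exact ha)
      have : L = L' := cremona_disj μ hμ hL hL' hbL hbL'
      exact ⟨L, hL, haL, this ▸ hcL'⟩

/-- For each `μ ∈ {0,1,2,3}` and pairs `p, q` of nonnegative integers with coordinate sum
`6 - 2μ`, the equivalence relation generated by the Cremona moves identifies `p` and `q`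
exactly when they lie in one of the listed classes; so the equivalence classes are exactly:
for `μ=0`: `{(6,0)}`, `{(0,6),(3,3),(4,2)}`, `{(1,5),(2,4),(5,1)}`;
for `μ=1`: `{(4,0)}`, `{(0,4),(1,3),(2,2),(3,1)}`;
for `μ=2`: `{(2,0)}`, `{(0,2),(1,1)}`; for `μ=3`: `{(0,0)}`. -/
theorem cremona_orbit_partition (μ : ℕ) (hμ : μ ≤ 3) (p q : ℕ × ℕ)
    (hp : p.1 + p.2 = 6 - 2 * μ) (hq : q.1 + q.2 = 6 - 2 * μ) :
    Relation.EqvGen (CremonaMove μ) p q ↔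
      ∃ L ∈ cremonaClasses μ, p ∈ L ∧ q ∈ L := by
  constructor
  · intro h
    exact (cremona_key μ hμ h).2 hp
  · rintro ⟨L, hL, hpL, hqL⟩
    interval_cases μ
    · -- μ = 0
      have e1 : Relation.EqvGen (CremonaMove 0) (0, 6) (3, 3) :=
        cremona_mk_edge (by have := CremonaMove.move1 (μ := 0) 0 6 (by norm_num); simpa using this)
      have e2 : Relation.EqvGen (CremonaMove 0) (3, 3) (4, 2) :=
        cremona_mk_edge (by have := CremonaMove.move2 (μ := 0) 3 3 (by norm_num) (by norm_num); simpa using this)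
      have e3 : Relation.EqvGen (CremonaMove 0) (1, 5) (2, 4) :=
        cremona_mk_edge (by have := CremonaMove.move1 (μ := 0) 1 5 (by norm_num); simpa using this)
      have e4 : Relation.EqvGen (CremonaMove 0) (2, 4) (5, 1) :=
        cremona_mk_edge (by have := CremonaMove.move2 (μ := 0) 2 4 (by norm_num) (by norm_num); simpa using this)
      simp only [cremonaClasses, List.mem_cons, List.mem_singleton, List.not_mem_nil,
        or_false] at hL
      rcases hL with rfl | rfl | rfl <;>
        simp only [List.mem_cons, List.mem_singleton, List.not_mem_nil, or_false] at hpL hqL <;>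
        rcases hpL with rfl | rfl | rfl <;> rcases hqL with rfl | rfl | rfl <;>
        first
          | exact Relation.EqvGen.refl _
          | exact e1 | exact cremona_esymm e1 | exact e2 | exact cremona_esymm e2
          | exact cremona_etrans e1 e2 | exact cremona_esymm (cremona_etrans e1 e2)
          | exact e3 | exact cremona_esymm e3 | exact e4 | exact cremona_esymm e4
          | exact cremona_etrans e3 e4 | exact cremona_esymm (cremona_etrans e3 e4)
    · -- μ = 1
      have f1 : Relation.EqvGen (CremonaMove 1) (0, 4) (1, 3) :=
        cremona_mk_edge (by have := CremonaMove.move1 (μ := 1) 0 4 (by norm_num); simpa using this)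
      have f3 : Relation.EqvGen (CremonaMove 1) (0, 4) (3, 1) :=
        cremona_mk_edge (by have := CremonaMove.move3 (μ := 1) 0 4 (by norm_num) le_rfl; simpa using this)
      have f2 : Relation.EqvGen (CremonaMove 1) (0, 4) (2, 2) := by
        refine cremona_etrans f1 (cremona_mk_edge ?_)
        have := CremonaMove.move3 (μ := 1) 1 3 (by norm_num) le_rfl; simpa using this
      simp only [cremonaClasses, List.mem_cons, List.mem_singleton, List.not_mem_nil,
        or_false] at hL
      rcases hL with rfl | rfl <;>
        simp only [List.mem_cons, List.mem_singleton, List.not_mem_nil, or_false] at hpL hqL <;>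
        rcases hpL with rfl | rfl | rfl | rfl <;> rcases hqL with rfl | rfl | rfl | rfl <;>
        first
          | exact Relation.EqvGen.refl _
          | exact f1 | exact cremona_esymm f1 | exact f2 | exact cremona_esymm f2 | exact f3 | exact cremona_esymm f3
          | exact cremona_etrans (cremona_esymm f1) f2 | exact cremona_etrans (cremona_esymm f2) f1
          | exact cremona_etrans (cremona_esymm f1) f3 | exact cremona_etrans (cremona_esymm f3) f1
          | exact cremona_etrans (cremona_esymm f2) f3 | exact cremona_etrans (cremona_esymm f3) f2
    · -- μ = 2
      have g1 : Relation.EqvGen (CremonaMove 2) (0, 2) (1, 1) :=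
        cremona_mk_edge (by have := CremonaMove.move3 (μ := 2) 0 2 (by norm_num) (by norm_num); simpa using this)
      simp only [cremonaClasses, List.mem_cons, List.mem_singleton, List.not_mem_nil,
        or_false] at hL
      rcases hL with rfl | rfl <;>
        simp only [List.mem_cons, List.mem_singleton, List.not_mem_nil, or_false] at hpL hqL <;>
        rcases hpL with rfl | rfl <;> rcases hqL with rfl | rfl <;>
        first
          | exact Relation.EqvGen.refl _
          | exact g1 | exact cremona_esymm g1
    · -- μ = 3
      simp only [cremonaClasses, List.mem_cons, List.mem_singleton, List.not_mem_nil,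
        or_false] at hL
      rcases hL with rfl
      simp only [List.mem_cons, List.mem_singleton, List.not_mem_nil, or_false] at hpL hqL
      rcases hpL with rfl; rcases hqL with rfl
      exact Relation.EqvGen.refl _
end
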